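/- Let 𝔸 = (A, ≤, →, Σ) be an implicative algebra with |A| < κ for a strongly inaccessible cardinal κ, and let W, ∈_W, =_W and the interpretation ‖·‖ be as defined below. If φ[x̄] and ψ[x̄] are formulas in a context x̄ of length n and the sequent φ ⊢ ψ is derivable in intuitionistic first-order logic with equality, then ‖φ[x̄]‖ ⊢_{Σ[Wⁿ]} ‖ψ[x̄]‖, i.e. ⨅_{ᾱ∈Wⁿ} (‖φ[x̄]‖(ᾱ) → ‖ψ[x̄]‖(ᾱ)) ∈ Σ. -/

import Mathlib

universe u

/-- An implicative algebra `𝔸 = (A, ≤, →, Σ)`:  a complete lattice `(A, ≤)` together with an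
implication `imp` which is antitone in its first argument, monotone in its second argument and
turns infima in the second argument into infima, and a separator `Sig ⊆ A` which is upward
closed, closed under modus ponens and contains the combinators `K` and `S`. -/
structure ImplicativeAlgebra (A : Type u) [CompleteLattice A] where
  imp : A → A → A
  imp_antitone : ∀ ⦃a a' b : A⦄, a ≤ a' → imp a' b ≤ imp a b
  imp_monotone : ∀ ⦃a b b' : A⦄, b ≤ b' → imp a b ≤ imp a b'
  imp_sInf : ∀ (a : A) (S : Set A), imp a (sInf S) = ⨅ b ∈ S, imp a b
  Sig : Set A
  Sig_upward : ∀ ⦃a b : A⦄, a ∈ Sig → a ≤ b → b ∈ Sig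
  Sig_mp : ∀ ⦃a b : A⦄, imp a b ∈ Sig → a ∈ Sig → b ∈ Sig
  Sig_K : (⨅ a : A, ⨅ b : A, imp a (imp b a)) ∈ Sig
  Sig_S : (⨅ a : A, ⨅ b : A, ⨅ c : A,
      imp (imp a (imp b c)) (imp (imp a b) (imp a c))) ∈ Sig

namespace ImplicativeAlgebra

variable {A : Type u} [CompleteLattice A]

/-- `a × b := ⨅ x, ((a → (b → x)) → x)`. -/
def times (IA : ImplicativeAlgebra A) (a b : A) : A :=
  ⨅ x : A, IA.imp (IA.imp a (IA.imp b x)) x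

/-- `a + b := ⨅ x, ((a → x) → ((b → x) → x))`. -/
def plus (IA : ImplicativeAlgebra A) (a b : A) : A :=
  ⨅ x : A, IA.imp (IA.imp a x) (IA.imp (IA.imp b x) x)

/-- `∃⃗_{i} f i := ⨅ x, ((⨅ i, (f i → x)) → x)`.  (`∀⃗` is just `⨅`.) -/
def aex (IA : ImplicativeAlgebra A) {ι : Sort*} (f : ι → A) : A :=
  ⨅ x : A, IA.imp (⨅ i, IA.imp (f i) x) x

/-- `φ ⊢_{Σ[I]} ψ` iff `⨅ i, (φ i → ψ i) ∈ Σ`. -/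
def SigLe (IA : ImplicativeAlgebra A) {ι : Sort*} (f g : ι → A) : Prop :=
  (⨅ i, IA.imp (f i) (g i)) ∈ IA.Sig

/-- `φ ≡_{Σ[I]} ψ` iff `φ ⊢_{Σ[I]} ψ` and `ψ ⊢_{Σ[I]} φ`. -/
def SigEquiv (IA : ImplicativeAlgebra A) {ι : Sort*} (f g : ι → A) : Prop :=
  IA.SigLe f g ∧ IA.SigLe g f

end ImplicativeAlgebra

/-- Pre-elements of the cumulative hierarchy of partial functions valued in `A`:
an element is an `A`-labelled family of previously constructed elements, i.e. a partial
function (presented by a family indexed by its domain) from earlier elements to `A`. -/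
inductive PreW (A : Type u) : Type (u + 1)
  | mk (ι : Type u) (fam : ι → PreW A) (val : ι → A)

namespace PreW

variable {A : Type u}

/-- The (index type of the) domain of a partial function. -/
def dom : PreW A → Type u
  | ⟨ι, _, _⟩ => ι

/-- The family of elements of the domain. -/
def fam : (w : PreW A) → w.dom → PreW A
  | ⟨_, f, _⟩ => f

/-- The values in `A` of the partial function. -/
def val : (w : PreW A) → w.dom → A
  | ⟨_, _, v⟩ => v

/-- `w` is hereditarily of size `< κ`:  this carves out exactly the elements of the stage
`W_κ` of the hierarchy (for `κ` inaccessible). -/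
def HSmall (κ : Cardinal.{u}) : PreW A → Prop
  | ⟨ι, f, _⟩ => Cardinal.mk ι < κ ∧ ∀ i, HSmall κ (f i)

theorem HSmall.fam {κ : Cardinal.{u}} :
    ∀ {w : PreW A}, w.HSmall κ → ∀ i : w.dom, (w.fam i).HSmall κ
  | ⟨_, _, _⟩, h, i => h.2 i

/-- The rank of an element of the hierarchy. -/
noncomputable def rank : PreW A → Ordinal.{u}
  | ⟨_, f, _⟩ => ⨆ i, Order.succ (rank (f i))

theorem rank_lt_mk {ι : Type u} (f : ι → PreW A) (v : ι → A) (i : ι) :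
    (f i).rank < (PreW.mk ι f v).rank := by
  have h : Order.succ (f i).rank ≤ ⨆ j, Order.succ (f j).rank := Ordinal.le_iSup _ i
  have : (f i).rank < ⨆ j, Order.succ (f j).rank :=
    lt_of_lt_of_le (Order.lt_succ _) h
  simpa [rank] using this

end PreW

namespace ImplicativeAlgebra

variable {A : Type u} [CompleteLattice A]

/-- `α =_W β`, defined by recursion on rank:
`α =_W β := (α ⊆_W β) × (β ⊆_W α)` where
`α ⊆_W β := ∀⃗_{t ∈ dom α} (α t → (fam α t ∈_W β))` and
`γ ∈_W β := ∃⃗_{s ∈ dom β} (β s × (fam β s =_W γ))`. -/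
noncomputable def eqW (IA : ImplicativeAlgebra A) : PreW A → PreW A → A
  | ⟨ι₁, f₁, v₁⟩, ⟨ι₂, f₂, v₂⟩ =>
    IA.times
      (⨅ t : ι₁, IA.imp (v₁ t)
        (IA.aex fun s : ι₂ => IA.times (v₂ s) (IA.eqW (f₂ s) (f₁ t))))
      (⨅ t : ι₂, IA.imp (v₂ t)
        (IA.aex fun s : ι₁ => IA.times (v₁ s) (IA.eqW (f₁ s) (f₂ t))))
termination_by α β => max α.rank β.rank
decreasing_by
  · exact max_lt (lt_max_of_lt_right (PreW.rank_lt_mk f₂ v₂ s))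
      (lt_max_of_lt_left (PreW.rank_lt_mk f₁ v₁ t))
  · exact max_lt (lt_max_of_lt_left (PreW.rank_lt_mk f₁ v₁ s))
      (lt_max_of_lt_right (PreW.rank_lt_mk f₂ v₂ t))

/-- `α ∈_W β := ∃⃗_{s ∈ dom β} (β s × (fam β s =_W α))`. -/
noncomputable def memW (IA : ImplicativeAlgebra A) (α β : PreW A) : A :=
  IA.aex fun s : β.dom => IA.times (β.val s) (IA.eqW (β.fam s) α)

/-- `α ⊆_W β := ∀⃗_{t ∈ dom α} (α t → (fam α t ∈_W β))`. -/
noncomputable def subW (IA : ImplicativeAlgebra A) (α β : PreW A) : A :=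
  ⨅ t : α.dom, IA.imp (α.val t) (IA.memW (α.fam t) β)

end ImplicativeAlgebra

/-- The stage `W = W_κ` of the hierarchy: all hereditarily `< κ`-sized elements. -/
def WSet (A : Type u) (κ : Cardinal.{u}) : Type (u + 1) :=
  {w : PreW A // w.HSmall κ}

/-- An element of the domain of `w ∈ W`, as an element of `W`. -/
def WSet.fam {A : Type u} {κ : Cardinal.{u}} (w : WSet A κ) (i : w.1.dom) : WSet A κ :=
  ⟨w.1.fam i, w.2.fam i⟩

/-- Formulas (in context of length `n`) of the first-order language of set theory, with
(de Bruijn-style) variables `Fin n`, binary predicates `∈` and `=`, connectives `⊥`, `∧`, `∨`,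
`→` and quantifiers `∃`, `∀` (binding the last variable of the enlarged context). -/
inductive SetFormula : ℕ → Type
  | bot {n : ℕ} : SetFormula n
  | mem {n : ℕ} (i j : Fin n) : SetFormula n
  | eq {n : ℕ} (i j : Fin n) : SetFormula n
  | and {n : ℕ} (φ ψ : SetFormula n) : SetFormula n
  | or {n : ℕ} (φ ψ : SetFormula n) : SetFormula n
  | imp {n : ℕ} (φ ψ : SetFormula n) : SetFormula n
  | ex {n : ℕ} (φ : SetFormula (n + 1)) : SetFormula n
  | all {n : ℕ} (φ : SetFormula (n + 1)) : SetFormula n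

namespace SetFormula

/-- Renaming of variables (since the only terms of the language of set theory are variables,
substitution is a special case). -/
def rename : {n m : ℕ} → (Fin n → Fin m) → SetFormula n → SetFormula m
  | _, _, _, .bot => .bot
  | _, _, f, .mem i j => .mem (f i) (f j)
  | _, _, f, .eq i j => .eq (f i) (f j)
  | _, _, f, .and φ ψ => .and (φ.rename f) (ψ.rename f)
  | _, _, f, .or φ ψ => .or (φ.rename f) (ψ.rename f)
  | _, _, f, .imp φ ψ => .imp (φ.rename f) (ψ.rename f)
  | _, _, f, .ex φ => .ex (φ.rename (Fin.snoc (Fin.castSucc ∘ f) (Fin.last _)))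
  | _, _, f, .all φ => .all (φ.rename (Fin.snoc (Fin.castSucc ∘ f) (Fin.last _)))

/-- Universal closure `∀x₁ … ∀xₙ φ` of a formula in context of length `n`. -/
def allClose : {n : ℕ} → SetFormula n → SetFormula 0
  | 0, φ => φ
  | _ + 1, φ => allClose (.all φ)

end SetFormula

namespace ImplicativeAlgebra

variable {A : Type u} [CompleteLattice A]

/-- The interpretation `‖φ[x₁,…,xₙ]‖ : Wⁿ → A` of a formula in context, by recursion on the
structure of `φ`:  atomic formulas are interpreted by `∈_W` and `=_W`, `∧` by `×`, `∨` by `+`,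
`→` by `→`, `∃` by `∃⃗` over `W` and `∀` by `∀⃗` (i.e. `⨅`) over `W`. -/
noncomputable def interp (IA : ImplicativeAlgebra A) (κ : Cardinal.{u}) :
    {n : ℕ} → SetFormula n → (Fin n → WSet A κ) → A
  | _, .bot, _ => ⊥
  | _, .mem i j, v => IA.memW (v i).1 (v j).1
  | _, .eq i j, v => IA.eqW (v i).1 (v j).1
  | _, .and φ ψ, v => IA.times (IA.interp κ φ v) (IA.interp κ ψ v)
  | _, .or φ ψ, v => IA.plus (IA.interp κ φ v) (IA.interp κ ψ v)
  | _, .imp φ ψ, v => IA.imp (IA.interp κ φ v) (IA.interp κ ψ v)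
  | _, .ex φ, v => IA.aex fun β : WSet A κ => IA.interp κ φ (Fin.snoc v β)
  | _, .all φ, v => ⨅ β : WSet A κ, IA.interp κ φ (Fin.snoc v β)

end ImplicativeAlgebra

/-- Single-antecedent sequent calculus for intuitionistic first-order logic with equality
over the language of set theory: `Der φ ψ` means the sequent `φ ⊢ ψ` is derivable. -/
inductive Der : {n : ℕ} → SetFormula n → SetFormula n → Prop
  | id {n} (φ : SetFormula n) : Der φ φ
  | cut {n} {φ ψ χ : SetFormula n} : Der φ ψ → Der ψ χ → Der φ χ
  | botE {n} (φ : SetFormula n) : Der .bot φ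
  | andI {n} {φ ψ χ : SetFormula n} : Der φ ψ → Der φ χ → Der φ (ψ.and χ)
  | andE1 {n} (φ ψ : SetFormula n) : Der (φ.and ψ) φ
  | andE2 {n} (φ ψ : SetFormula n) : Der (φ.and ψ) ψ
  | orI1 {n} (φ ψ : SetFormula n) : Der φ (φ.or ψ)
  | orI2 {n} (φ ψ : SetFormula n) : Der ψ (φ.or ψ)
  | orE {n} {φ ψ χ ρ : SetFormula n} :
      Der (φ.and ψ) χ → Der (φ.and ρ) χ → Der (φ.and (ψ.or ρ)) χ
  | impI {n} {φ ψ χ : SetFormula n} : Der (φ.and ψ) χ → Der φ (ψ.imp χ)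
  | impE {n} (φ ψ : SetFormula n) : Der ((φ.imp ψ).and φ) ψ
  | allI {n} {φ : SetFormula n} {ψ : SetFormula (n + 1)} :
      Der (φ.rename Fin.castSucc) ψ → Der φ (.all ψ)
  | allE {n} (φ : SetFormula (n + 1)) (k : Fin n) :
      Der (.all φ) (φ.rename (Fin.snoc (fun i => i) k))
  | exI {n} (φ : SetFormula (n + 1)) (k : Fin n) :
      Der (φ.rename (Fin.snoc (fun i => i) k)) (.ex φ)
  | exE {n} {φ χ : SetFormula n} {ψ : SetFormula (n + 1)} :
      Der ((φ.rename Fin.castSucc).and ψ) (χ.rename Fin.castSucc) →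
      Der (φ.and (.ex ψ)) χ
  | eqRefl {n} (φ : SetFormula n) (i : Fin n) : Der φ (.eq i i)
  | eqSubst {n} (i j : Fin n) (φ : SetFormula n) :
      Der ((SetFormula.eq i j).and φ) (φ.rename fun k => if k = i then j else k)

/-!
Application `a · b := ⨅ {c | a ≤ b → c}` satisfies `a · b ≤ c ↔ a ≤ b → c`, so `K, S ∈ Σ` give
combinatory completeness: every applicative expression with coefficients in `Σ` is realized by
an element of `Σ` (bracket abstraction). With it, Σ-entailment between families `ι → A` obeys the
rules of intuitionistic logic, `×`, `+`, `→`, `⨅`, `∃⃗` acting as connectives and quantifiers;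
this accounts for every rule of `Der` except those for equality.

Reflexivity and transitivity of `=_W` need a single realizer for all elements of `W`.
Transitivity unfolds into congruence of `∈_W` and transitivity of `⊆_W`, which call transitivity
only at triples of smaller rank, so Turing's fixed-point combinator turns a realizer of this
induction step into a realizer of transitivity. Leibniz's rule then follows by induction on
formulas, comparing the valuations `v[i ↦ a]` and `v[i ↦ b]` in the context `a =_W b`.
-/

theorem PreW.rank_fam_lt {A : Type u} (w : PreW A) (i : w.dom) : (w.fam i).rank < w.rank := by
  cases w with | mk ι f v => exact PreW.rank_lt_mk f v i

namespace ImplicativeAlgebra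

variable {A : Type u} [CompleteLattice A] {IA : ImplicativeAlgebra A}

/-! ### Application and combinatory completeness -/

variable (IA) in
def ap (a b : A) : A := sInf {c | a ≤ IA.imp b c}

theorem ap_le_iff {a b c : A} : IA.ap a b ≤ c ↔ a ≤ IA.imp b c := by
  refine ⟨fun h => ?_, fun h => sInf_le h⟩
  refine le_trans ?_ (IA.imp_monotone h)
  rw [ap, IA.imp_sInf]
  exact le_iInf₂ fun c hc => hc

theorem le_imp_ap (a b : A) : a ≤ IA.imp b (IA.ap a b) :=
  ap_le_iff.1 le_rfl

theorem ap_mono {a a' b b' : A} (ha : a ≤ a') (hb : b ≤ b') : IA.ap a b ≤ IA.ap a' b' :=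
  ap_le_iff.2 <| ha.trans <| (le_imp_ap _ _).trans (IA.imp_antitone hb)

theorem ap_le_of_le_imp {s x a b : A} (hs : s ≤ IA.imp a b) (hx : x ≤ a) : IA.ap s x ≤ b :=
  ap_le_iff.2 (hs.trans (IA.imp_antitone hx))

theorem ap_mem {a b : A} (ha : a ∈ IA.Sig) (hb : b ∈ IA.Sig) : IA.ap a b ∈ IA.Sig :=
  IA.Sig_mp (IA.Sig_upward ha (le_imp_ap _ _)) hb

theorem imp_iInf {ι : Sort*} (a : A) (f : ι → A) :
    IA.imp a (⨅ i, f i) = ⨅ i, IA.imp a (f i) := by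
  rw [← sInf_range, IA.imp_sInf, iInf_range]

theorem exists_K : ∃ k ∈ IA.Sig, ∀ a b : A, IA.ap (IA.ap k a) b ≤ a :=
  ⟨_, IA.Sig_K, fun a b => ap_le_iff.2 (ap_le_iff.2 ((iInf_le _ a).trans (iInf_le _ b)))⟩

theorem exists_S : ∃ s ∈ IA.Sig, ∀ a b c : A,
    IA.ap (IA.ap (IA.ap s a) b) c ≤ IA.ap (IA.ap a c) (IA.ap b c) := by
  refine ⟨_, IA.Sig_S, fun a b c => ?_⟩
  set d := IA.ap (IA.ap a c) (IA.ap b c)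
  have hS : (⨅ a : A, ⨅ b : A, ⨅ c : A,
      IA.imp (IA.imp a (IA.imp b c)) (IA.imp (IA.imp a b) (IA.imp a c))) ≤
      IA.imp (IA.imp c (IA.imp (IA.ap b c) d)) (IA.imp (IA.imp c (IA.ap b c)) (IA.imp c d)) :=
    (iInf_le _ c).trans <| (iInf_le _ (IA.ap b c)).trans <| iInf_le _ d
  have ha : a ≤ IA.imp c (IA.imp (IA.ap b c) d) :=
    (le_imp_ap a c).trans (IA.imp_monotone (le_imp_ap _ _))
  exact ap_le_of_le_imp (ap_le_of_le_imp (ap_le_of_le_imp hS ha) (le_imp_ap b c)) le_rfl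

inductive SigPoly (IA : ImplicativeAlgebra A) (m : ℕ) : ((Fin m → A) → A) → Prop
  | var (i : Fin m) : SigPoly IA m fun ρ => ρ i
  | const {c : A} (hc : c ∈ IA.Sig) : SigPoly IA m fun _ => c
  | app {f g : (Fin m → A) → A} :
      SigPoly IA m f → SigPoly IA m g → SigPoly IA m fun ρ => IA.ap (f ρ) (g ρ)

theorem SigPoly.exists_abs {m : ℕ} {f : (Fin (m + 1) → A) → A} (hf : SigPoly IA (m + 1) f) :
    ∃ g, SigPoly IA m g ∧ ∀ ρ a, IA.ap (g ρ) a ≤ f (Fin.snoc ρ a) := by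
  obtain ⟨k, hk, hK⟩ := exists_K (IA := IA)
  obtain ⟨s, hs, hS⟩ := exists_S (IA := IA)
  induction hf with
  | var i =>
    induction i using Fin.lastCases with
    | last =>
      refine ⟨fun _ => IA.ap (IA.ap s k) k, .const (ap_mem (ap_mem hs hk) hk), fun ρ a => ?_⟩
      simpa using (hS k k a).trans (hK a _)
    | cast j =>
      exact ⟨fun ρ => IA.ap k (ρ j), .app (.const hk) (.var j), fun ρ a => by simpa using hK _ a⟩
  | const hc => exact ⟨fun _ => IA.ap k _, .app (.const hk) (.const hc), fun ρ a => hK _ a⟩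
  | app _ _ ihf ihg =>
    obtain ⟨f', hf', hf'a⟩ := ihf
    obtain ⟨g', hg', hg'a⟩ := ihg
    exact ⟨fun ρ => IA.ap (IA.ap s (f' ρ)) (g' ρ), .app (.app (.const hs) hf') hg',
      fun ρ a => (hS _ _ _).trans (ap_mono (hf'a ρ a) (hg'a ρ a))⟩

theorem SigPoly.mem_sig {f : (Fin 0 → A) → A} (hf : SigPoly IA 0 f) (ρ : Fin 0 → A) :
    f ρ ∈ IA.Sig := by
  induction hf with
  | var i => exact i.elim0
  | const hc => exact hc
  | app _ _ ihf ihg => exact ap_mem ihf ihg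

variable (IA) in
def apps (s : A) : {m : ℕ} → (Fin m → A) → A
  | 0, _ => s
  | m + 1, ρ => IA.ap (apps s (Fin.init ρ)) (ρ (Fin.last m))

theorem SigPoly.exists_realizer : ∀ {m : ℕ} {g : (Fin m → A) → A}, SigPoly IA m g →
    ∃ s ∈ IA.Sig, ∀ ρ, IA.apps s ρ ≤ g ρ
  | 0, g, hg => ⟨g finZeroElim, hg.mem_sig _, fun ρ => (congrArg g (Subsingleton.elim _ _)).le⟩
  | m + 1, g, hg => by
    obtain ⟨g₀, hg₀, hg₀a⟩ := hg.exists_abs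
    obtain ⟨s, hs, hsρ⟩ := hg₀.exists_realizer
    refine ⟨s, hs, fun ρ => ((ap_mono (hsρ _) le_rfl).trans (hg₀a _ _)).trans_eq ?_⟩
    rw [Fin.snoc_init_self]

/- The `SigPoly` argument is found by the default tactic, so a realizer is obtained by just
stating its reduction rule. -/
theorem exists_realizer₁ {f : A → A}
    (hf : SigPoly IA 1 (fun ρ => f (ρ 0)) := by
      repeat' first | exact .var _ | exact .const (by assumption) | refine .app ?_ ?_) :
    ∃ s ∈ IA.Sig, ∀ a, IA.ap s a ≤ f a :=
  let ⟨s, hs, h⟩ := hf.exists_realizer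
  ⟨s, hs, fun a => h ![a]⟩

theorem exists_realizer₂ {f : A → A → A}
    (hf : SigPoly IA 2 (fun ρ => f (ρ 0) (ρ 1)) := by
      repeat' first | exact .var _ | exact .const (by assumption) | refine .app ?_ ?_) :
    ∃ s ∈ IA.Sig, ∀ a b, IA.ap (IA.ap s a) b ≤ f a b :=
  let ⟨s, hs, h⟩ := hf.exists_realizer
  ⟨s, hs, fun a b => h ![a, b]⟩

theorem exists_realizer₃ {f : A → A → A → A}
    (hf : SigPoly IA 3 (fun ρ => f (ρ 0) (ρ 1) (ρ 2)) := by
      repeat' first | exact .var _ | exact .const (by assumption) | refine .app ?_ ?_) :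
    ∃ s ∈ IA.Sig, ∀ a b c, IA.ap (IA.ap (IA.ap s a) b) c ≤ f a b c :=
  let ⟨s, hs, h⟩ := hf.exists_realizer
  ⟨s, hs, fun a b c => h ![a, b, c]⟩

theorem exists_realizer₄ {f : A → A → A → A → A}
    (hf : SigPoly IA 4 (fun ρ => f (ρ 0) (ρ 1) (ρ 2) (ρ 3)) := by
      repeat' first | exact .var _ | exact .const (by assumption) | refine .app ?_ ?_) :
    ∃ s ∈ IA.Sig, ∀ a b c d, IA.ap (IA.ap (IA.ap (IA.ap s a) b) c) d ≤ f a b c d :=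
  let ⟨s, hs, h⟩ := hf.exists_realizer
  ⟨s, hs, fun a b c d => h ![a, b, c, d]⟩

theorem le_times {a b c : A} (h : ∀ x, c ≤ IA.imp (IA.imp a (IA.imp b x)) x) :
    c ≤ IA.times a b :=
  le_iInf h

theorem le_plus {a b c : A} (h : ∀ x, c ≤ IA.imp (IA.imp a x) (IA.imp (IA.imp b x) x)) :
    c ≤ IA.plus a b :=
  le_iInf h

theorem le_aex {ι : Sort*} {f : ι → A} {c : A} (h : ∀ x, c ≤ IA.imp (⨅ i, IA.imp (f i) x) x) :
    c ≤ IA.aex f :=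
  le_iInf h

theorem exists_pair : ∃ p ∈ IA.Sig, ∀ a b, IA.ap (IA.ap p a) b ≤ IA.times a b := by
  obtain ⟨p, hp, hpab⟩ : ∃ p ∈ IA.Sig, ∀ a b k : A,
      IA.ap (IA.ap (IA.ap p a) b) k ≤ IA.ap (IA.ap k a) b := exists_realizer₃
  exact ⟨p, hp, fun a b => le_times fun x => ap_le_iff.1 <|
    (hpab a b _).trans (ap_le_of_le_imp (ap_le_of_le_imp le_rfl le_rfl) le_rfl)⟩

theorem exists_fst : ∃ p ∈ IA.Sig, ∀ a b, IA.ap p (IA.times a b) ≤ a := by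
  obtain ⟨k, hk, hkab⟩ : ∃ k ∈ IA.Sig, ∀ a b : A, IA.ap (IA.ap k a) b ≤ a := exists_realizer₂
  obtain ⟨p, hp, hpq⟩ : ∃ p ∈ IA.Sig, ∀ q, IA.ap p q ≤ IA.ap q k := exists_realizer₁
  exact ⟨p, hp, fun a b => (hpq _).trans <| ap_le_of_le_imp (iInf_le _ a) <|
    ap_le_iff.1 <| ap_le_iff.1 <| hkab a b⟩

theorem exists_snd : ∃ p ∈ IA.Sig, ∀ a b, IA.ap p (IA.times a b) ≤ b := by
  obtain ⟨k, hk, hkab⟩ : ∃ k ∈ IA.Sig, ∀ a b : A, IA.ap (IA.ap k a) b ≤ b := exists_realizer₂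
  obtain ⟨p, hp, hpq⟩ : ∃ p ∈ IA.Sig, ∀ q, IA.ap p q ≤ IA.ap q k := exists_realizer₁
  exact ⟨p, hp, fun a b => (hpq _).trans <| ap_le_of_le_imp (iInf_le _ b) <|
    ap_le_iff.1 <| ap_le_iff.1 <| hkab a b⟩

theorem times_mono {a a' b b' : A} (ha : a ≤ a') (hb : b ≤ b') :
    IA.times a b ≤ IA.times a' b' :=
  iInf_mono fun _ => IA.imp_antitone <|
    (IA.imp_antitone ha).trans (IA.imp_monotone (IA.imp_antitone hb))

/-! ### Σ-entailment -/

section SigLe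

variable {ι : Sort*} {f g h k : ι → A}

theorem sigLe_iff_exists_realizer : IA.SigLe f g ↔ ∃ s ∈ IA.Sig, ∀ i, IA.ap s (f i) ≤ g i :=
  ⟨fun h => ⟨_, h, fun i => ap_le_of_le_imp (iInf_le _ i) le_rfl⟩,
    fun ⟨_, hs, hsf⟩ => IA.Sig_upward hs (le_iInf fun i => ap_le_iff.1 (hsf i))⟩

theorem sigLe_of_le (h : ∀ i, f i ≤ g i) : IA.SigLe f g := by
  obtain ⟨s, hs, hsa⟩ : ∃ s ∈ IA.Sig, ∀ a : A, IA.ap s a ≤ a := exists_realizer₁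
  exact sigLe_iff_exists_realizer.2 ⟨s, hs, fun i => (hsa _).trans (h i)⟩

theorem SigLe.refl (f : ι → A) : IA.SigLe f f :=
  sigLe_of_le fun _ => le_rfl

theorem SigLe.trans (hfg : IA.SigLe f g) (hgh : IA.SigLe g h) : IA.SigLe f h := by
  obtain ⟨F, hF, hFf⟩ := sigLe_iff_exists_realizer.1 hfg
  obtain ⟨G, hG, hGg⟩ := sigLe_iff_exists_realizer.1 hgh
  obtain ⟨s, hs, hsa⟩ : ∃ s ∈ IA.Sig, ∀ a, IA.ap s a ≤ IA.ap G (IA.ap F a) := exists_realizer₁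
  exact sigLe_iff_exists_realizer.2
    ⟨s, hs, fun i => (hsa _).trans ((ap_mono le_rfl (hFf i)).trans (hGg i))⟩

theorem SigLe.comp {κ : Sort*} (hfg : IA.SigLe f g) (e : κ → ι) :
    IA.SigLe (fun j => f (e j)) (fun j => g (e j)) :=
  IA.Sig_upward hfg (le_iInf fun j => iInf_le _ (e j))

theorem sigLe_of_mem_of_le {c : A} (hc : c ∈ IA.Sig) (h : ∀ i, c ≤ g i) : IA.SigLe f g := by
  obtain ⟨s, hs, hsa⟩ : ∃ s ∈ IA.Sig, ∀ a, IA.ap s a ≤ c := exists_realizer₁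
  exact sigLe_iff_exists_realizer.2 ⟨s, hs, fun i => (hsa _).trans (h i)⟩

theorem sigLe_times (hg : IA.SigLe f g) (hh : IA.SigLe f h) :
    IA.SigLe f (fun i => IA.times (g i) (h i)) := by
  obtain ⟨G, hG, hGf⟩ := sigLe_iff_exists_realizer.1 hg
  obtain ⟨H, hH, hHf⟩ := sigLe_iff_exists_realizer.1 hh
  obtain ⟨p, hp, hpab⟩ := exists_pair (IA := IA)
  obtain ⟨s, hs, hsa⟩ : ∃ s ∈ IA.Sig, ∀ a, IA.ap s a ≤ IA.ap (IA.ap p (IA.ap G a)) (IA.ap H a) :=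
    exists_realizer₁
  exact sigLe_iff_exists_realizer.2 ⟨s, hs, fun i =>
    (hsa _).trans ((hpab _ _).trans (times_mono (hGf i) (hHf i)))⟩

theorem sigLe_imp_iff :
    IA.SigLe f (fun i => IA.imp (g i) (h i)) ↔ IA.SigLe (fun i => IA.times (f i) (g i)) h := by
  refine ⟨fun hc => ?_, fun hu => ?_⟩
  · obtain ⟨C, hC, hCf⟩ := sigLe_iff_exists_realizer.1 hc
    obtain ⟨s, hs, hsa⟩ : ∃ s ∈ IA.Sig, ∀ a, IA.ap s a ≤ IA.ap a C := exists_realizer₁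
    exact sigLe_iff_exists_realizer.2 ⟨s, hs, fun i =>
      (hsa _).trans (ap_le_of_le_imp (iInf_le _ (h i)) (ap_le_iff.1 (hCf i)))⟩
  · obtain ⟨U, hU, hUf⟩ := sigLe_iff_exists_realizer.1 hu
    obtain ⟨p, hp, hpab⟩ := exists_pair (IA := IA)
    obtain ⟨s, hs, hsab⟩ : ∃ s ∈ IA.Sig, ∀ a b,
        IA.ap (IA.ap s a) b ≤ IA.ap U (IA.ap (IA.ap p a) b) := exists_realizer₂
    exact sigLe_iff_exists_realizer.2 ⟨s, hs, fun i => ap_le_iff.1 <| (hsab _ _).trans <|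
      (ap_mono le_rfl (hpab _ _)).trans (hUf i)⟩

theorem SigLe.mp (himp : IA.SigLe f (fun i => IA.imp (g i) (h i))) (hg : IA.SigLe f g) :
    IA.SigLe f h :=
  (sigLe_times (SigLe.refl f) hg).trans (sigLe_imp_iff.1 himp)

theorem times_sigLe_left : IA.SigLe (fun i => IA.times (f i) (g i)) f := by
  obtain ⟨s, hs, hsab⟩ : ∃ s ∈ IA.Sig, ∀ a b : A, IA.ap (IA.ap s a) b ≤ a := exists_realizer₂
  exact sigLe_imp_iff.1 <| sigLe_iff_exists_realizer.2 ⟨s, hs, fun i => ap_le_iff.1 (hsab _ _)⟩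

theorem times_sigLe_right : IA.SigLe (fun i => IA.times (f i) (g i)) g := by
  obtain ⟨s, hs, hsab⟩ : ∃ s ∈ IA.Sig, ∀ a b : A, IA.ap (IA.ap s a) b ≤ b := exists_realizer₂
  exact sigLe_imp_iff.1 <| sigLe_iff_exists_realizer.2 ⟨s, hs, fun i => ap_le_iff.1 (hsab _ _)⟩

theorem sigLe_plus_left : IA.SigLe f (fun i => IA.plus (f i) (g i)) := by
  obtain ⟨s, hs, hsab⟩ : ∃ s ∈ IA.Sig, ∀ a u w : A, IA.ap (IA.ap (IA.ap s a) u) w ≤ IA.ap u a :=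
    exists_realizer₃
  exact sigLe_iff_exists_realizer.2 ⟨s, hs, fun i => le_plus fun x => ap_le_iff.1 <| ap_le_iff.1 <|
    (hsab _ _ _).trans (ap_le_of_le_imp le_rfl le_rfl)⟩

theorem sigLe_plus_right : IA.SigLe g (fun i => IA.plus (f i) (g i)) := by
  obtain ⟨s, hs, hsab⟩ : ∃ s ∈ IA.Sig, ∀ a u w : A, IA.ap (IA.ap (IA.ap s a) u) w ≤ IA.ap w a :=
    exists_realizer₃
  exact sigLe_iff_exists_realizer.2 ⟨s, hs, fun i => le_plus fun x => ap_le_iff.1 <| ap_le_iff.1 <|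
    (hsab _ _ _).trans (ap_le_of_le_imp le_rfl le_rfl)⟩

theorem sigLe_imp_plus (hg : IA.SigLe f (fun i => IA.imp (g i) (h i)))
    (hk : IA.SigLe f (fun i => IA.imp (k i) (h i))) :
    IA.SigLe f (fun i => IA.imp (IA.plus (g i) (k i)) (h i)) := by
  obtain ⟨G, hG, hGf⟩ := sigLe_iff_exists_realizer.1 hg
  obtain ⟨K, hK, hKf⟩ := sigLe_iff_exists_realizer.1 hk
  obtain ⟨s, hs, hsab⟩ : ∃ s ∈ IA.Sig, ∀ a b : A,
      IA.ap (IA.ap s a) b ≤ IA.ap (IA.ap b (IA.ap G a)) (IA.ap K a) := exists_realizer₂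
  exact sigLe_iff_exists_realizer.2 ⟨s, hs, fun i => ap_le_iff.1 <| (hsab _ _).trans <|
    ap_le_of_le_imp (ap_le_of_le_imp (iInf_le _ (h i)) (hGf i)) (hKf i)⟩

theorem sigLe_aex {κ : ι → Sort*} {g : ∀ i, κ i → A} (e : ∀ i, κ i) :
    IA.SigLe (fun i => g i (e i)) (fun i => IA.aex (g i)) := by
  obtain ⟨s, hs, hsab⟩ : ∃ s ∈ IA.Sig, ∀ a b : A, IA.ap (IA.ap s a) b ≤ IA.ap b a :=
    exists_realizer₂
  exact sigLe_iff_exists_realizer.2 ⟨s, hs, fun i => le_aex fun x => ap_le_iff.1 <|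
    (hsab _ _).trans (ap_le_of_le_imp (iInf_le _ (e i)) le_rfl)⟩

theorem sigLe_imp_aex {κ : ι → Sort*} {g : ∀ i, κ i → A}
    (hg : IA.SigLe f (fun i => ⨅ j, IA.imp (g i j) (h i))) :
    IA.SigLe f (fun i => IA.imp (IA.aex (g i)) (h i)) := by
  obtain ⟨G, hG, hGf⟩ := sigLe_iff_exists_realizer.1 hg
  obtain ⟨s, hs, hsab⟩ : ∃ s ∈ IA.Sig, ∀ a b : A, IA.ap (IA.ap s a) b ≤ IA.ap b (IA.ap G a) :=
    exists_realizer₂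
  exact sigLe_iff_exists_realizer.2 ⟨s, hs, fun i => ap_le_iff.1 <|
    (hsab _ _).trans (ap_le_of_le_imp (iInf_le _ (h i)) (hGf i))⟩

theorem SigLe.imp_mono_right (himp : IA.SigLe f (fun i => IA.imp (g i) (h i)))
    (hh : IA.SigLe h k) : IA.SigLe f (fun i => IA.imp (g i) (k i)) :=
  sigLe_imp_iff.2 ((sigLe_imp_iff.1 himp).trans hh)

section Congr

variable {g₁ g₂ k₁ k₂ : ι → A}

theorem SigLe.times_imp_times (hg : IA.SigLe f (fun i => IA.imp (g₁ i) (g₂ i)))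
    (hk : IA.SigLe f (fun i => IA.imp (k₁ i) (k₂ i))) :
    IA.SigLe f (fun i => IA.imp (IA.times (g₁ i) (k₁ i)) (IA.times (g₂ i) (k₂ i))) := by
  refine sigLe_imp_iff.2 (sigLe_times ((times_sigLe_left.trans hg).mp ?_)
    ((times_sigLe_left.trans hk).mp ?_))
  · exact times_sigLe_right.trans times_sigLe_left
  · exact times_sigLe_right.trans times_sigLe_right

theorem SigLe.plus_imp_plus (hg : IA.SigLe f (fun i => IA.imp (g₁ i) (g₂ i)))
    (hk : IA.SigLe f (fun i => IA.imp (k₁ i) (k₂ i))) :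
    IA.SigLe f (fun i => IA.imp (IA.plus (g₁ i) (k₁ i)) (IA.plus (g₂ i) (k₂ i))) :=
  sigLe_imp_plus (hg.imp_mono_right sigLe_plus_left) (hk.imp_mono_right sigLe_plus_right)

theorem SigLe.imp_imp_imp (hg : IA.SigLe f (fun i => IA.imp (g₂ i) (g₁ i)))
    (hk : IA.SigLe f (fun i => IA.imp (k₁ i) (k₂ i))) :
    IA.SigLe f (fun i => IA.imp (IA.imp (g₁ i) (k₁ i)) (IA.imp (g₂ i) (k₂ i))) := by
  have hf : IA.SigLe (fun i => IA.times (IA.times (f i) (IA.imp (g₁ i) (k₁ i))) (g₂ i)) f :=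
    times_sigLe_left.trans times_sigLe_left
  refine sigLe_imp_iff.2 (sigLe_imp_iff.2 ((hf.trans hk).mp ?_))
  exact (times_sigLe_left.trans times_sigLe_right).mp ((hf.trans hg).mp times_sigLe_right)

end Congr

end SigLe

section SigLeProd

variable {ι κ : Type*} {f : ι → A} {g : ι → κ → A}

theorem sigLe_iInf_iff :
    IA.SigLe (fun p : ι × κ => f p.1) (fun p => g p.1 p.2) ↔ IA.SigLe f (fun i => ⨅ j, g i j) := by
  simp only [SigLe, imp_iInf, iInf_prod]

theorem SigLe.iInf_imp_iInf {g₁ g₂ : ι → κ → A}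
    (h : IA.SigLe (fun p : ι × κ => f p.1) (fun p => IA.imp (g₁ p.1 p.2) (g₂ p.1 p.2))) :
    IA.SigLe f (fun i => IA.imp (⨅ j, g₁ i j) (⨅ j, g₂ i j)) := by
  refine sigLe_imp_iff.2 (sigLe_iInf_iff.1 ((times_sigLe_left.trans h).mp ?_))
  exact times_sigLe_right.trans (sigLe_of_le fun p => iInf_le _ p.2)

theorem SigLe.aex_imp_aex {g₁ g₂ : ι → κ → A}
    (h : IA.SigLe (fun p : ι × κ => f p.1) (fun p => IA.imp (g₁ p.1 p.2) (g₂ p.1 p.2))) :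
    IA.SigLe f (fun i => IA.imp (IA.aex (g₁ i)) (IA.aex (g₂ i))) :=
  sigLe_imp_aex (sigLe_iInf_iff.1 (h.imp_mono_right (sigLe_aex (g := fun p => g₂ p.1) Prod.snd)))

end SigLeProd

/-- The realizer is Turing's fixed-point combinator applied to a realizer of the induction step. -/
theorem exists_le_of_wellFounded {ι : Type*} {r : ι → ι → Prop} (hr : WellFounded r)
    {P : ι → A} (h : IA.SigLe (fun i => ⨅ j : {j // r j i}, P j) P) :
    ∃ t ∈ IA.Sig, ∀ i, t ≤ P i := by
  obtain ⟨G, hG, hGi⟩ := sigLe_iff_exists_realizer.1 h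
  obtain ⟨T, hT, hTab⟩ : ∃ T ∈ IA.Sig, ∀ a b : A,
      IA.ap (IA.ap T a) b ≤ IA.ap b (IA.ap (IA.ap a a) b) := exists_realizer₂
  refine ⟨IA.ap (IA.ap T T) G, ap_mem (ap_mem hT hT) hG, fun i => ?_⟩
  induction i using hr.induction with
  | _ i ih =>
    exact (hTab T G).trans <|
      (ap_mono le_rfl (le_iInf fun j : {j // r j i} => ih j.1 j.2)).trans (hGi i)

/-! ### Equality and membership in `W` -/

theorem eqW_eq (α β : PreW A) : IA.eqW α β = IA.times (IA.subW α β) (IA.subW β α) := by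
  cases α
  cases β
  rw [eqW]
  rfl

theorem exists_eqW_refl : ∃ e ∈ IA.Sig, ∀ α : PreW A, e ≤ IA.eqW α α := by
  obtain ⟨p, hp, hpab⟩ := exists_pair (IA := IA)
  obtain ⟨D, hD, hDa⟩ : ∃ D ∈ IA.Sig, ∀ h v k : A,
      IA.ap (IA.ap (IA.ap D h) v) k ≤ IA.ap k (IA.ap (IA.ap p v) h) := exists_realizer₃
  obtain ⟨E, hE, hEa⟩ : ∃ E ∈ IA.Sig, ∀ h : A,
      IA.ap E h ≤ IA.ap (IA.ap p (IA.ap D h)) (IA.ap D h) := exists_realizer₁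
  refine exists_le_of_wellFounded (InvImage.wf PreW.rank Ordinal.lt_wf)
    (sigLe_iff_exists_realizer.2 ⟨E, hE, fun α => ?_⟩)
  have hsub : IA.ap D (⨅ β : {β // β.rank < α.rank}, IA.eqW β.1 β.1) ≤ IA.subW α α := by
    refine le_iInf fun t => ap_le_iff.1 <| le_aex fun x => ap_le_iff.1 <| (hDa _ _ _).trans ?_
    refine ap_le_of_le_imp (iInf_le _ t) ((hpab _ _).trans (times_mono le_rfl ?_))
    exact iInf_le (fun β : {β // β.rank < α.rank} => IA.eqW β.1 β.1) ⟨_, α.rank_fam_lt t⟩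
  rw [eqW_eq]
  exact (hEa _).trans ((hpab _ _).trans (times_mono hsub hsub))

variable (IA) in
noncomputable def eqWTrans (α β γ : PreW A) : A :=
  IA.imp (IA.eqW α β) (IA.imp (IA.eqW β γ) (IA.eqW α γ))

theorem exists_memW_congr_left_step : ∃ w ∈ IA.Sig, ∀ δ' δ γ : PreW A,
    w ≤ IA.imp (⨅ s, IA.eqWTrans (γ.fam s) δ' δ)
      (IA.imp (IA.eqW δ' δ) (IA.imp (IA.memW δ' γ) (IA.memW δ γ))) := by
  obtain ⟨p, hp, hpab⟩ := exists_pair (IA := IA)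
  obtain ⟨p₁, hp₁, hp₁ab⟩ := exists_fst (IA := IA)
  obtain ⟨p₂, hp₂, hp₂ab⟩ := exists_snd (IA := IA)
  obtain ⟨C, hC, hCa⟩ : ∃ C ∈ IA.Sig, ∀ h e q k : A, IA.ap (IA.ap (IA.ap (IA.ap C h) e) q) k ≤
      IA.ap k (IA.ap (IA.ap p (IA.ap p₁ q)) (IA.ap (IA.ap h (IA.ap p₂ q)) e)) := exists_realizer₄
  obtain ⟨w, hw, hwa⟩ : ∃ w ∈ IA.Sig, ∀ h e m : A,
      IA.ap (IA.ap (IA.ap w h) e) m ≤ IA.ap m (IA.ap (IA.ap C h) e) := exists_realizer₃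
  refine ⟨w, hw, fun δ' δ γ => ap_le_iff.1 <| ap_le_iff.1 <| ap_le_iff.1 <| (hwa _ _ _).trans ?_⟩
  refine ap_le_of_le_imp (iInf_le _ _) (le_iInf fun s => ap_le_iff.1 <| le_aex fun x => ?_)
  refine ap_le_iff.1 <| (hCa _ _ _ _).trans <| ap_le_of_le_imp (iInf_le _ s) <|
    (hpab _ _).trans <| times_mono (hp₁ab _ _) ?_
  exact ap_le_of_le_imp (ap_le_of_le_imp (iInf_le _ s) (hp₂ab _ _)) le_rfl

theorem exists_memW_subW_step : ∃ m ∈ IA.Sig, ∀ δ β γ : PreW A,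
    m ≤ IA.imp (⨅ (s) (s'), IA.eqWTrans (γ.fam s') (β.fam s) δ)
      (IA.imp (IA.memW δ β) (IA.imp (IA.subW β γ) (IA.memW δ γ))) := by
  obtain ⟨w, hw, hwle⟩ := exists_memW_congr_left_step (IA := IA)
  obtain ⟨p₁, hp₁, hp₁ab⟩ := exists_fst (IA := IA)
  obtain ⟨p₂, hp₂, hp₂ab⟩ := exists_snd (IA := IA)
  obtain ⟨D, hD, hDa⟩ : ∃ D ∈ IA.Sig, ∀ h u q : A, IA.ap (IA.ap (IA.ap D h) u) q ≤
      IA.ap (IA.ap (IA.ap w h) (IA.ap p₂ q)) (IA.ap u (IA.ap p₁ q)) := exists_realizer₃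
  obtain ⟨m, hm, hma⟩ : ∃ m ∈ IA.Sig, ∀ h q u : A,
      IA.ap (IA.ap (IA.ap m h) q) u ≤ IA.ap q (IA.ap (IA.ap D h) u) := exists_realizer₃
  refine ⟨m, hm, fun δ β γ => ap_le_iff.1 <| ap_le_iff.1 <| ap_le_iff.1 <| (hma _ _ _).trans ?_⟩
  refine ap_le_of_le_imp (iInf_le _ _) (le_iInf fun s => ap_le_iff.1 <| (hDa _ _ _).trans ?_)
  refine ap_le_of_le_imp (ap_le_of_le_imp (ap_le_of_le_imp (hwle _ _ _) (iInf_le _ s))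
    (hp₂ab _ _)) ?_
  exact ap_le_of_le_imp (iInf_le _ s) (hp₁ab _ _)

theorem exists_subW_trans_step : ∃ S ∈ IA.Sig, ∀ α β γ : PreW A,
    S ≤ IA.imp (⨅ (r) (s) (s'), IA.eqWTrans (γ.fam s') (β.fam s) (α.fam r))
      (IA.imp (IA.subW α β) (IA.imp (IA.subW β γ) (IA.subW α γ))) := by
  obtain ⟨m, hm, hmle⟩ := exists_memW_subW_step (IA := IA)
  obtain ⟨S, hS, hSa⟩ : ∃ S ∈ IA.Sig, ∀ h x y v : A, IA.ap (IA.ap (IA.ap (IA.ap S h) x) y) v ≤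
      IA.ap (IA.ap (IA.ap m h) (IA.ap x v)) y := exists_realizer₄
  refine ⟨S, hS, fun α β γ => ap_le_iff.1 <| ap_le_iff.1 <| ap_le_iff.1 <| le_iInf fun r => ?_⟩
  refine ap_le_iff.1 <| (hSa _ _ _ _).trans <| ap_le_of_le_imp ?_ le_rfl
  exact ap_le_of_le_imp (ap_le_of_le_imp (hmle _ _ _) (iInf_le _ r))
    (ap_le_of_le_imp (iInf_le _ r) le_rfl)

theorem exists_eqW_trans_step : ∃ G ∈ IA.Sig, ∀ α β γ : PreW A,
    G ≤ IA.imp ((⨅ (r) (s) (s'), IA.eqWTrans (γ.fam s') (β.fam s) (α.fam r)) ⊓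
      ⨅ (r) (s) (s'), IA.eqWTrans (α.fam s') (β.fam s) (γ.fam r)) (IA.eqWTrans α β γ) := by
  obtain ⟨S, hS, hSle⟩ := exists_subW_trans_step (IA := IA)
  obtain ⟨p, hp, hpab⟩ := exists_pair (IA := IA)
  obtain ⟨p₁, hp₁, hp₁ab⟩ := exists_fst (IA := IA)
  obtain ⟨p₂, hp₂, hp₂ab⟩ := exists_snd (IA := IA)
  obtain ⟨G, hG, hGa⟩ : ∃ G ∈ IA.Sig, ∀ h e e' : A, IA.ap (IA.ap (IA.ap G h) e) e' ≤
      IA.ap (IA.ap p (IA.ap (IA.ap (IA.ap S h) (IA.ap p₁ e)) (IA.ap p₁ e')))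
        (IA.ap (IA.ap (IA.ap S h) (IA.ap p₂ e')) (IA.ap p₂ e)) := exists_realizer₃
  have hfst : ∀ α β : PreW A, IA.ap p₁ (IA.eqW α β) ≤ IA.subW α β := fun α β => by
    rw [eqW_eq]; exact hp₁ab _ _
  have hsnd : ∀ α β : PreW A, IA.ap p₂ (IA.eqW α β) ≤ IA.subW β α := fun α β => by
    rw [eqW_eq]; exact hp₂ab _ _
  refine ⟨G, hG, fun α β γ => ap_le_iff.1 <| ap_le_iff.1 <| ap_le_iff.1 <| (hGa _ _ _).trans ?_⟩
  rw [eqW_eq α γ]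
  refine (hpab _ _).trans (times_mono ?_ ?_)
  · exact ap_le_of_le_imp (ap_le_of_le_imp (ap_le_of_le_imp (hSle α β γ) inf_le_left)
      (hfst α β)) (hfst β γ)
  · exact ap_le_of_le_imp (ap_le_of_le_imp (ap_le_of_le_imp (hSle γ β α) inf_le_right)
      (hsnd β γ)) (hsnd α β)

theorem exists_eqW_trans : ∃ t ∈ IA.Sig, ∀ α β γ : PreW A, t ≤ IA.eqWTrans α β γ := by
  obtain ⟨G, hG, hGle⟩ := exists_eqW_trans_step (IA := IA)
  let maxRank : PreW A × PreW A × PreW A → Ordinal := fun t =>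
    max t.1.rank (max t.2.1.rank t.2.2.rank)
  have hstep : IA.SigLe (fun i => ⨅ j : {j // maxRank j < maxRank i},
      IA.eqWTrans j.1.1 j.1.2.1 j.1.2.2) (fun i => IA.eqWTrans i.1 i.2.1 i.2.2) := by
    refine sigLe_iff_exists_realizer.2 ⟨G, hG, fun ⟨α, β, γ⟩ => ap_le_of_le_imp (hGle α β γ) ?_⟩
    refine le_inf (le_iInf fun r => le_iInf fun s => le_iInf fun s' => ?_)
      (le_iInf fun r => le_iInf fun s => le_iInf fun s' => ?_)
    · refine iInf_le_of_le ⟨(γ.fam s', β.fam s, α.fam r), ?_⟩ le_rfl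
      exact max_lt (lt_max_of_lt_right (lt_max_of_lt_right (γ.rank_fam_lt s')))
        (max_lt (lt_max_of_lt_right (lt_max_of_lt_left (β.rank_fam_lt s)))
          (lt_max_of_lt_left (α.rank_fam_lt r)))
    · refine iInf_le_of_le ⟨(α.fam s', β.fam s, γ.fam r), ?_⟩ le_rfl
      exact max_lt (lt_max_of_lt_left (α.rank_fam_lt s'))
        (max_lt (lt_max_of_lt_right (lt_max_of_lt_left (β.rank_fam_lt s)))
          (lt_max_of_lt_right (lt_max_of_lt_right (γ.rank_fam_lt r))))
  obtain ⟨t, ht, hle⟩ := exists_le_of_wellFounded (InvImage.wf maxRank Ordinal.lt_wf)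
    (P := fun i => IA.eqWTrans i.1 i.2.1 i.2.2) hstep
  exact ⟨t, ht, fun α β γ => hle (α, β, γ)⟩

section SigLeEqW

variable {ι : Sort*} {f : ι → A} {x x' y y' z : ι → PreW A}

theorem sigLe_eqW_refl (x : ι → PreW A) : IA.SigLe f (fun i => IA.eqW (x i) (x i)) := by
  obtain ⟨e, he, hle⟩ := exists_eqW_refl (IA := IA)
  exact sigLe_of_mem_of_le he fun i => hle (x i)

theorem SigLe.subW_of_eqW (h : IA.SigLe f (fun i => IA.eqW (x i) (y i))) :
    IA.SigLe f (fun i => IA.subW (x i) (y i)) := by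
  simp only [eqW_eq] at h
  exact h.trans times_sigLe_left

theorem SigLe.eqW_symm (h : IA.SigLe f (fun i => IA.eqW (x i) (y i))) :
    IA.SigLe f (fun i => IA.eqW (y i) (x i)) := by
  simp only [eqW_eq] at h ⊢
  exact sigLe_times (h.trans times_sigLe_right) (h.trans times_sigLe_left)

theorem SigLe.eqW_trans (hxy : IA.SigLe f (fun i => IA.eqW (x i) (y i)))
    (hyz : IA.SigLe f (fun i => IA.eqW (y i) (z i))) :
    IA.SigLe f (fun i => IA.eqW (x i) (z i)) := by
  obtain ⟨t, ht, hle⟩ := exists_eqW_trans (IA := IA)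
  exact ((sigLe_of_mem_of_le ht fun i => hle (x i) (y i) (z i)).mp hxy).mp hyz

theorem SigLe.memW_congr (hx : IA.SigLe f (fun i => IA.eqW (x i) (x' i)))
    (hy : IA.SigLe f (fun i => IA.eqW (y i) (y' i)))
    (h : IA.SigLe f (fun i => IA.memW (x i) (y i))) :
    IA.SigLe f (fun i => IA.memW (x' i) (y' i)) := by
  obtain ⟨t, ht, htle⟩ := exists_eqW_trans (IA := IA)
  obtain ⟨w, hw, hwle⟩ := exists_memW_congr_left_step (IA := IA)
  obtain ⟨m, hm, hmle⟩ := exists_memW_subW_step (IA := IA)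
  have hx' : IA.SigLe f (fun i => IA.memW (x' i) (y i)) := by
    refine ((sigLe_of_mem_of_le (ap_mem hw ht) fun i => ?_).mp hx).mp h
    exact ap_le_of_le_imp (hwle _ _ _) (le_iInf fun _ => htle _ _ _)
  refine ((sigLe_of_mem_of_le (ap_mem hm ht) fun i => ?_).mp hx').mp hy.subW_of_eqW
  exact ap_le_of_le_imp (hmle _ _ _) (le_iInf₂ fun _ _ => htle _ _ _)

end SigLeEqW

/-! ### Soundness -/

section Interpretation

open Function

variable {κ : Cardinal.{u}}

theorem interp_rename {n m : ℕ} (φ : SetFormula n) (f : Fin n → Fin m) (v : Fin m → WSet A κ) :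
    IA.interp κ (φ.rename f) v = IA.interp κ φ (v ∘ f) := by
  induction φ generalizing m with
  | bot | mem | eq => rfl
  | and _ _ ihφ ihψ | or _ _ ihφ ihψ | imp _ _ ihφ ihψ =>
    simp only [SetFormula.rename, interp, ihφ, ihψ]
  | ex _ ih | all _ ih =>
    simp only [SetFormula.rename, interp, ih, Fin.comp_snoc, ← Function.comp_assoc,
      Fin.snoc_comp_castSucc, Fin.snoc_last]

theorem interp_rename_castSucc {n : ℕ} (φ : SetFormula n) (v : Fin n → WSet A κ) (β : WSet A κ) :
    IA.interp κ (φ.rename Fin.castSucc) (Fin.snoc v β) = IA.interp κ φ v := by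
  rw [interp_rename, Fin.snoc_comp_castSucc]

theorem interp_rename_snoc {n : ℕ} (φ : SetFormula (n + 1)) (k : Fin n) (v : Fin n → WSet A κ) :
    IA.interp κ (φ.rename (Fin.snoc (fun i => i) k)) v = IA.interp κ φ (Fin.snoc v (v k)) := by
  rw [interp_rename, Fin.comp_snoc]
  rfl

theorem interp_rename_subst {n : ℕ} (φ : SetFormula n) (i j : Fin n) (v : Fin n → WSet A κ) :
    IA.interp κ (φ.rename fun k => if k = i then j else k) v =
      IA.interp κ φ (update v i (v j)) := by
  rw [interp_rename]
  congr 1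
  ext k
  by_cases hk : k = i <;> simp [hk]

section Leibniz

variable {n : ℕ} {ι : Type (u + 1)}

theorem sigLe_eqW_update (i k : Fin n) (v : ι → Fin n → WSet A κ) (a b : ι → WSet A κ) :
    IA.SigLe (fun j => IA.eqW (a j).1 (b j).1)
      (fun j => IA.eqW (update (v j) i (a j) k).1 (update (v j) i (b j) k).1) := by
  rcases eq_or_ne k i with rfl | hk
  · simpa only [update_self] using SigLe.refl _
  · simpa only [update_of_ne hk] using sigLe_eqW_refl _

theorem sigLe_interp_update (φ : SetFormula n) (i : Fin n) (v : ι → Fin n → WSet A κ)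
    (a b : ι → WSet A κ) :
    IA.SigLe (fun j => IA.eqW (a j).1 (b j).1) (fun j =>
      IA.imp (IA.interp κ φ (update (v j) i (a j))) (IA.interp κ φ (update (v j) i (b j)))) := by
  induction φ generalizing ι with
  | bot => exact sigLe_imp_iff.2 times_sigLe_right
  | mem k l =>
    exact sigLe_imp_iff.2 ((times_sigLe_left.trans (sigLe_eqW_update i k v a b)).memW_congr
      (times_sigLe_left.trans (sigLe_eqW_update i l v a b)) times_sigLe_right)
  | eq k l =>
    refine sigLe_imp_iff.2 ((SigLe.eqW_symm ?_).eqW_trans times_sigLe_right |>.eqW_trans ?_)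
    · exact times_sigLe_left.trans (sigLe_eqW_update i k v a b)
    · exact times_sigLe_left.trans (sigLe_eqW_update i l v a b)
  | and _ _ ihφ ihψ => exact (ihφ i v a b).times_imp_times (ihψ i v a b)
  | or _ _ ihφ ihψ => exact (ihφ i v a b).plus_imp_plus (ihψ i v a b)
  | imp _ _ ihφ ihψ =>
    exact ((SigLe.refl _).eqW_symm.trans (ihφ i v b a)).imp_imp_imp (ihψ i v a b)
  | ex _ ih =>
    have h := ih i.castSucc (fun q : ι × WSet A κ => Fin.snoc (v q.1) q.2) (a ·.1) (b ·.1)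
    simp only [← Fin.snoc_update] at h
    exact SigLe.aex_imp_aex h
  | all _ ih =>
    have h := ih i.castSucc (fun q : ι × WSet A κ => Fin.snoc (v q.1) q.2) (a ·.1) (b ·.1)
    simp only [← Fin.snoc_update] at h
    exact SigLe.iInf_imp_iInf h

end Leibniz

theorem sigLe_interp_of_der {n : ℕ} {φ ψ : SetFormula n} (h : Der φ ψ) :
    IA.SigLe (IA.interp κ φ) (IA.interp κ ψ) := by
  induction h with
  | id => exact SigLe.refl _
  | cut _ _ ih₁ ih₂ => exact ih₁.trans ih₂
  | botE => exact sigLe_of_le fun _ => bot_le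
  | andI _ _ ih₁ ih₂ => exact sigLe_times ih₁ ih₂
  | andE1 => exact times_sigLe_left
  | andE2 => exact times_sigLe_right
  | orI1 => exact sigLe_plus_left
  | orI2 => exact sigLe_plus_right
  | orE _ _ ih₁ ih₂ =>
    exact sigLe_imp_iff.1 (sigLe_imp_plus (sigLe_imp_iff.2 ih₁) (sigLe_imp_iff.2 ih₂))
  | impI _ ih => exact sigLe_imp_iff.2 ih
  | impE => exact sigLe_imp_iff.1 (SigLe.refl _)
  | allI _ ih =>
    have h := ih.comp fun p : (Fin _ → WSet A κ) × WSet A κ => Fin.snoc p.1 p.2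
    simp only [interp_rename_castSucc] at h
    exact sigLe_iInf_iff.1 h
  | allE φ k =>
    exact sigLe_of_le fun v => (iInf_le _ (v k)).trans_eq (interp_rename_snoc φ k v).symm
  | exI φ k =>
    exact (sigLe_of_le fun v => (interp_rename_snoc φ k v).le).trans
      (sigLe_aex (g := fun v β => IA.interp κ φ (Fin.snoc v β)) fun v => v k)
  | exE _ ih =>
    have h := (sigLe_imp_iff.2 ih).comp fun p : (Fin _ → WSet A κ) × WSet A κ => Fin.snoc p.1 p.2
    simp only [interp_rename_castSucc] at h
    exact sigLe_imp_iff.1 (sigLe_imp_aex (sigLe_iInf_iff.1 h))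
  | eqRefl _ i => exact sigLe_eqW_refl _
  | eqSubst i j φ =>
    have h := sigLe_interp_update (IA := IA) φ i (fun v : Fin _ → WSet A κ => v) (· i) (· j)
    simp only [update_eq_self, ← interp_rename_subst] at h
    exact sigLe_imp_iff.1 h

end Interpretation

end ImplicativeAlgebra

theorem stmt7_general {A : Type u} [CompleteLattice A] (IA : ImplicativeAlgebra A)
    (κ : Cardinal.{u}) {n : ℕ} {φ ψ : SetFormula n} (h : Der φ ψ) :
    (⨅ v : Fin n → WSet A κ, IA.imp (IA.interp κ φ v) (IA.interp κ ψ v)) ∈ IA.Sig :=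
  ImplicativeAlgebra.sigLe_interp_of_der h

theorem stmt7 {A : Type u} [CompleteLattice A] (IA : ImplicativeAlgebra A)
    (κ : Cardinal.{u}) (hκ : κ.IsInaccessible) (hA : Cardinal.mk A < κ) {n : ℕ} {φ ψ : SetFormula n} (h : Der φ ψ) :
    (⨅ v : Fin n → WSet A κ, IA.imp (IA.interp κ φ v) (IA.interp κ ψ v)) ∈ IA.Sig :=
  stmt7_general IA κ h
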